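/- arXiv:2005.12311 — 2 statements merged into one kernel-verified Lean document; each statement's English description precedes it below -/
import Mathlib

section
/- For a > 1, m, n ∈ ℕ₊, and x, y ≥ 0, the bivariate Szász-Mirakjan type operator applied to the function f(t,s) = t satisfies Ŷ_{m,n,a}(e₁₀; x, y) = x log a / (m (a^{1/m} − 1)). -/
open Real Filter

/-- One-dimensional Szász–Mirakjan type kernel. -/
noncomputable def szKernel (a : ℝ) (m : ℕ) (x : ℝ) (k : ℕ) : ℝ :=
  a ^ (-x / (a ^ ((m : ℝ)⁻¹) - 1)) * (x * Real.log a) ^ k /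
    ((a ^ ((m : ℝ)⁻¹) - 1) ^ k * (k.factorial : ℝ))

/-- Bivariate Szász–Mirakjan type operator. -/
noncomputable def szBiv (a : ℝ) (m n : ℕ) (f : ℝ → ℝ → ℝ) (x y : ℝ) : ℝ :=
  ∑' k₁ : ℕ, ∑' k₂ : ℕ,
    szKernel a m x k₁ * szKernel a n y k₂ * f ((k₁ : ℝ) / m) ((k₂ : ℝ) / n)

/-- Associated GBS (Generalized Boolean Sum) operator. -/
noncomputable def szGBS (a : ℝ) (m n : ℕ) (f : ℝ → ℝ → ℝ) (x y : ℝ) : ℝ :=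
  ∑' k₁ : ℕ, ∑' k₂ : ℕ,
    szKernel a m x k₁ * szKernel a n y k₂ *
      (f x ((k₂ : ℝ) / n) + f ((k₁ : ℝ) / m) y - f ((k₁ : ℝ) / m) ((k₂ : ℝ) / n))

/-!
The one-variable kernel `szKernel a m x` is the Poisson distribution with rate
`w = x log a / (a^(1/m) - 1)`. The bivariate kernel is a product of two such distributions, so for
`f(t, s) = t` the sum over `k₂` is `1`, and what remains is `1/m` times the Poisson mean `w`.
-/

open scoped Nat

lemma Real.hasSum_pow_div_factorial (w : ℝ) : HasSum (fun k : ℕ => w ^ k / k !) (exp w) := by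
  simpa only [← Real.exp_eq_exp_ℝ] using NormedSpace.expSeries_div_hasSum_exp w

lemma Real.hasSum_natCast_mul_pow_div_factorial (w : ℝ) :
    HasSum (fun k : ℕ => k * w ^ k / k !) (w * exp w) := by
  have hshift (k : ℕ) : ((k + 1 : ℕ) : ℝ) * w ^ (k + 1) / (k + 1)! = w * (w ^ k / k !) := by
    rw [Nat.factorial_succ]
    push_cast
    field_simp
    ring
  rw [← hasSum_nat_add_iff' 1]
  simp only [Finset.sum_range_one, Nat.cast_zero, zero_mul, zero_div, sub_zero, hshift]
  exact (Real.hasSum_pow_div_factorial w).mul_left w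

/-- The rate of the Poisson distribution `szKernel a m x`; it may be negative. -/
noncomputable def szRate (a : ℝ) (m : ℕ) (x : ℝ) : ℝ :=
  x * Real.log a / (a ^ ((m : ℝ)⁻¹) - 1)

section Kernel

variable {a : ℝ} (m : ℕ) (x : ℝ)

lemma szKernel_eq_poisson (ha : 0 < a) (k : ℕ) :
    szKernel a m x k = exp (-szRate a m x) * (szRate a m x ^ k / k !) := by
  rw [szKernel, szRate, Real.rpow_def_of_pos ha, neg_div, mul_neg, mul_div_assoc', mul_comm x]
  ring

lemma hasSum_szKernel (ha : 0 < a) : HasSum (szKernel a m x) 1 := by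
  have := (Real.hasSum_pow_div_factorial (szRate a m x)).mul_left (exp (-szRate a m x))
  rwa [← Real.exp_add, neg_add_cancel, Real.exp_zero, ← funext (szKernel_eq_poisson m x ha)]
    at this

lemma hasSum_szKernel_mul_natCast (ha : 0 < a) :
    HasSum (fun k : ℕ => szKernel a m x k * k) (szRate a m x) := by
  have := (Real.hasSum_natCast_mul_pow_div_factorial (szRate a m x)).mul_left
    (exp (-szRate a m x))
  rw [mul_left_comm, ← Real.exp_add, neg_add_cancel, Real.exp_zero, mul_one] at this
  refine this.congr_fun fun k => ?_
  rw [szKernel_eq_poisson m x ha]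
  ring

end Kernel

lemma szBiv_of_fst {a : ℝ} (ha : 0 < a) (m n : ℕ) (g : ℝ → ℝ) (x y : ℝ) :
    szBiv a m n (fun t _ => g t) x y = ∑' k, szKernel a m x k * g (k / m) := by
  refine tsum_congr fun k => ?_
  simp_rw [mul_right_comm _ (szKernel a n y _), tsum_mul_left, (hasSum_szKernel n y ha).tsum_eq,
    mul_one]

theorem stmt_1_general (a : ℝ) (ha : 1 < a) (m n : ℕ) (x y : ℝ) :
    szBiv a m n (fun t _ => t) x y =
      x * Real.log a / (m * (a ^ ((m : ℝ)⁻¹) - 1)) := by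
  have ha₀ : 0 < a := zero_lt_one.trans ha
  rw [szBiv_of_fst ha₀ m n (fun t => t)]
  simp_rw [mul_div_assoc', tsum_div_const, (hasSum_szKernel_mul_natCast m x ha₀).tsum_eq, szRate,
    div_div, mul_comm (m : ℝ)]

theorem stmt_1 (a : ℝ) (ha : 1 < a) (m n : ℕ) (hm : 0 < m) (hn : 0 < n)
    (x y : ℝ) (hx : 0 ≤ x) (hy : 0 ≤ y) :
    szBiv a m n (fun t _ => t) x y =
      x * Real.log a / (m * (a ^ ((m : ℝ)⁻¹) - 1)) :=
  stmt_1_general a ha m n x y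
end

section
/- For a > 1, m, n ∈ ℕ₊, and x, y ≥ 0, the second central moment is Ŷ_{m,n,a}((t−x)²; x, y) = x (m² x (a^{1/m}−1)² − (a^{1/m}−1) log a (2mx − 1) + x (log a)²) / (m² (a^{1/m}−1)²). -/
open Real Filter

/-!
The kernel `szKernel a m x k` is the Poisson weight `e^{-u} u^k / k!` with parameter
`u = x log a / (a^{1/m} - 1)`. Hence the `y`-factor of the bivariate operator sums to `1`, and
the second central moment is `E[(K/m - x)²]` for `K ~ Poisson(u)`, which the moments
`E K = u` and `E K² = u + u²` evaluate.
-/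

open scoped Nat

noncomputable def poissonWeight (u : ℝ) (k : ℕ) : ℝ := exp (-u) * (u ^ k / k !)

lemma hasSum_poissonWeight (u : ℝ) : HasSum (poissonWeight u) 1 := by
  have h := (NormedSpace.expSeries_div_hasSum_exp u).mul_left (exp (-u))
  rwa [← Real.exp_eq_exp_ℝ, ← exp_add, neg_add_cancel, exp_zero] at h

lemma poissonWeight_succ_mul (u : ℝ) (k : ℕ) :
    poissonWeight u (k + 1) * (k + 1 : ℕ) = u * poissonWeight u k := by
  simp only [poissonWeight, Nat.factorial_succ, pow_succ, Nat.cast_mul]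
  field_simp

/-- Size-biasing a Poisson law shifts it by one: `k p_u(k) = u p_u(k - 1)`. -/
lemma HasSum.poissonWeight_mul_natCast_mul {u s : ℝ} {g : ℕ → ℝ}
    (hs : HasSum (fun k => poissonWeight u k * g (k + 1)) s) :
    HasSum (fun k => poissonWeight u k * (k * g k)) (u * s) := by
  rw [← hasSum_nat_add_iff' 1, Finset.sum_range_one, Nat.cast_zero, zero_mul, mul_zero, sub_zero]
  refine (hs.mul_left u).congr_fun fun k => ?_
  rw [← mul_assoc, ← mul_assoc, ← poissonWeight_succ_mul]

lemma hasSum_poissonWeight_mul_natCast (u : ℝ) :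
    HasSum (fun k => poissonWeight u k * k) u := by
  have h := HasSum.poissonWeight_mul_natCast_mul (g := fun _ => 1)
    (by simpa using hasSum_poissonWeight u)
  simpa only [mul_one] using h

lemma hasSum_poissonWeight_mul_natCast_sq (u : ℝ) :
    HasSum (fun k => poissonWeight u k * (k : ℝ) ^ 2) (u + u ^ 2) := by
  have h : HasSum (fun k => poissonWeight u k * ((k + 1 : ℕ) : ℝ)) (u + 1) := by
    simpa [mul_add] using (hasSum_poissonWeight_mul_natCast u).add (hasSum_poissonWeight u)
  convert h.poissonWeight_mul_natCast_mul using 1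
  · ext k; ring
  · ring

lemma hasSum_poissonWeight_mul_div_sub_sq (u c x : ℝ) :
    HasSum (fun k => poissonWeight u k * ((k : ℝ) / c - x) ^ 2)
      ((u + u ^ 2) / c ^ 2 - 2 * x / c * u + x ^ 2) := by
  have h := (((hasSum_poissonWeight_mul_natCast_sq u).div_const (c ^ 2)).sub
    ((hasSum_poissonWeight_mul_natCast u).mul_left (2 * x / c))).add
    ((hasSum_poissonWeight u).mul_left (x ^ 2))
  rw [mul_one] at h
  exact h.congr_fun fun k => by ring

lemma szKernel_eq_poissonWeight {a : ℝ} (ha : 0 < a) (m : ℕ) (x : ℝ) (k : ℕ) :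
    szKernel a m x k = poissonWeight (x * log a / (a ^ ((m : ℝ)⁻¹) - 1)) k := by
  rw [szKernel, poissonWeight, rpow_def_of_pos ha, div_pow, div_div]
  ring_nf

lemma szBiv_eq_tsum_of_const_snd {a : ℝ} (ha : 0 < a) (m n : ℕ) (g : ℝ → ℝ) (x y : ℝ) :
    szBiv a m n (fun t _ => g t) x y = ∑' k : ℕ, szKernel a m x k * g (k / m) := by
  refine tsum_congr fun k => ?_
  simp_rw [mul_right_comm _ _ (g _), tsum_mul_left, szKernel_eq_poissonWeight ha,
    (hasSum_poissonWeight _).tsum_eq, mul_one]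

theorem stmt_4_general (a : ℝ) (ha : 1 < a) (m n : ℕ) (hm : 0 < m)
    (x y : ℝ) :
    szBiv a m n (fun t _ => (t - x) ^ 2) x y =
      x * ((m : ℝ) ^ 2 * x * (a ^ ((m : ℝ)⁻¹) - 1) ^ 2 -
            (a ^ ((m : ℝ)⁻¹) - 1) * Real.log a * (2 * m * x - 1) +
            x * (Real.log a) ^ 2) /
        ((m : ℝ) ^ 2 * (a ^ ((m : ℝ)⁻¹) - 1) ^ 2) := by
  have ha₀ : 0 < a := zero_lt_one.trans ha
  have hb : a ^ ((m : ℝ)⁻¹) - 1 ≠ 0 := (sub_pos.2 (one_lt_rpow ha (by positivity))).ne'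
  simp_rw [szBiv_eq_tsum_of_const_snd ha₀, szKernel_eq_poissonWeight ha₀,
    (hasSum_poissonWeight_mul_div_sub_sq _ m x).tsum_eq]
  generalize a ^ ((m : ℝ)⁻¹) - 1 = b at hb ⊢
  field_simp
  ring

theorem stmt_4 (a : ℝ) (ha : 1 < a) (m n : ℕ) (hm : 0 < m) (hn : 0 < n)
    (x y : ℝ) (hx : 0 ≤ x) (hy : 0 ≤ y) :
    szBiv a m n (fun t _ => (t - x) ^ 2) x y =
      x * ((m : ℝ) ^ 2 * x * (a ^ ((m : ℝ)⁻¹) - 1) ^ 2 -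
            (a ^ ((m : ℝ)⁻¹) - 1) * Real.log a * (2 * m * x - 1) +
            x * (Real.log a) ^ 2) /
        ((m : ℝ) ^ 2 * (a ^ ((m : ℝ)⁻¹) - 1) ^ 2) :=
  stmt_4_general a ha m n hm x y
end
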